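/- Let Z, Ψ ∈ ℝ^{d×n} and r ≤ d. Then √(Σ_{j=r+1}^{d} σ_j(Z + Ψ)²) ≤ √2 · √(Σ_{j=r+1}^{d} σ_j(Z)²) + √2 · ‖Ψ‖_F, where σ_j denotes the j-th largest singular value. -/

import Mathlib

open Matrix

noncomputable def frob {m n : Type*} [Fintype m] [Fintype n]
    (A : Matrix m n ℝ) : ℝ :=
  Real.sqrt (∑ i, ∑ j, (A i j) ^ 2)

/-- `B` is a best rank-`r` approximation of `A` in Frobenius norm. -/
def IsBestRankApprox {m n : Type*} [Fintype m] [Fintype n] [DecidableEq m] [DecidableEq n]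
    (r : ℕ) (B A : Matrix m n ℝ) : Prop :=
  B.rank ≤ r ∧ ∀ C : Matrix m n ℝ, C.rank ≤ r → frob (B - A) ≤ frob (C - A)

/-- `σ` lists the singular values of `A` in decreasing order: it is antitone,
nonnegative, and the multiset of its squares is the multiset of eigenvalues of
the Gram matrix `Aᴴ A`. -/
def IsSingularValues {m n : Type*} [Fintype m] [Fintype n] [DecidableEq n]
    (A : Matrix m n ℝ) (σ : n → ℝ) [LinearOrder n] : Prop :=
  Antitone σ ∧ (∀ j, 0 ≤ σ j) ∧
    Finset.univ.val.map (fun j => σ j ^ 2) =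
      Finset.univ.val.map (Matrix.isHermitian_conjTranspose_mul_self A).eigenvalues

section Aux
open Matrix Finset RealInnerProductSpace

variable {n : ℕ}

lemma dot_eq_inner (x y : EuclideanSpace ℝ (Fin n)) :
    (x : Fin n → ℝ) ⬝ᵥ (y : Fin n → ℝ) = (inner ℝ x y : ℝ) := by
  simp [PiLp.inner_apply, dotProduct, RCLike.inner_apply, mul_comm]

lemma quad_expand {H : Matrix (Fin n) (Fin n) ℝ} (hH : H.IsHermitian)
    (s : Finset (Fin n)) (c : s → ℝ) (x : EuclideanSpace ℝ (Fin n))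
    (hx : x = ∑ i : s, c i • hH.eigenvectorBasis i) :
    (x : Fin n → ℝ) ⬝ᵥ (H *ᵥ (x : Fin n → ℝ)) = ∑ i : s, hH.eigenvalues i * c i ^ 2 ∧
      (x : Fin n → ℝ) ⬝ᵥ (x : Fin n → ℝ) = ∑ i : s, c i ^ 2 := by
  set v := hH.eigenvectorBasis with hvdef
  have hv := v.orthonormal
  have hon : ∀ i j : s, ⟪v ↑i, v ↑j⟫ = if i = j then 1 else 0 := by
    intro i j
    by_cases h : i = j
    · subst h
      rw [real_inner_self_eq_norm_mul_norm, hv.1 ↑i]; norm_num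
    · rw [if_neg h]
      exact hv.2 (fun hh => h (Subtype.ext hh))
  have hHx : (H *ᵥ (x : Fin n → ℝ) : Fin n → ℝ)
      = ((∑ i : s, (c i * hH.eigenvalues ↑i) • v ↑i : EuclideanSpace ℝ (Fin n)) : Fin n → ℝ) := by
    rw [hx]
    show H.mulVecLin _ = _
    have hcoe : ((∑ i : s, c i • v ↑i : EuclideanSpace ℝ (Fin n)) : Fin n → ℝ)
        = ∑ i : s, c i • (v ↑i : Fin n → ℝ) := by simp [WithLp.ofLp_sum, WithLp.ofLp_smul]
    rw [hcoe, map_sum]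
    have hcoe2 : ((∑ i : s, (c i * hH.eigenvalues ↑i) • v ↑i : EuclideanSpace ℝ (Fin n)) : Fin n → ℝ)
        = ∑ i : s, (c i * hH.eigenvalues ↑i) • (v ↑i : Fin n → ℝ) := by simp [WithLp.ofLp_sum, WithLp.ofLp_smul]
    rw [hcoe2]
    refine Finset.sum_congr rfl fun i _ => ?_
    rw [LinearMap.map_smul, mulVecLin_apply]
    erw [hH.mulVec_eigenvectorBasis]
    rw [smul_smul, mul_comm]
  have key : ∀ (a b : s → ℝ),
      (((∑ i : s, a i • v ↑i : EuclideanSpace ℝ (Fin n))) : Fin n → ℝ) ⬝ᵥ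
        ((∑ i : s, b i • v ↑i : EuclideanSpace ℝ (Fin n)) : Fin n → ℝ)
        = ∑ i : s, a i * b i := by
    intro a b
    rw [dot_eq_inner, inner_sum]
    simp_rw [sum_inner, inner_smul_left, inner_smul_right, hon]
    simp [mul_comm]
  constructor
  · rw [hHx, hx, key]
    refine Finset.sum_congr rfl fun i _ => ?_; ring
  · rw [hx, key]
    refine Finset.sum_congr rfl fun i _ => ?_; ring

namespace SVTail

noncomputable def V {H : Matrix (Fin n) (Fin n) ℝ} (hH : H.IsHermitian) (s : Finset (Fin n)) :
    Submodule ℝ (EuclideanSpace ℝ (Fin n)) :=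
  Submodule.span ℝ (Set.range (fun i : s => hH.eigenvectorBasis i))

lemma finrank_V {H : Matrix (Fin n) (Fin n) ℝ} (hH : H.IsHermitian) (s : Finset (Fin n)) :
    Module.finrank ℝ (V hH s) = s.card := by
  have h := finrank_span_eq_card (R := ℝ)
    ((hH.eigenvectorBasis.orthonormal.comp (Subtype.val : s → Fin n)
      Subtype.val_injective).linearIndependent)
  rw [V]
  show Module.finrank ℝ
    (Submodule.span ℝ (Set.range (⇑hH.eigenvectorBasis ∘ (Subtype.val : s → Fin n)))) = _
  rw [h, Fintype.card_coe]

lemma quad_le_of_mem_V {H : Matrix (Fin n) (Fin n) ℝ} (hH : H.IsHermitian)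
    {s : Finset (Fin n)} {t : ℝ} (hup : ∀ i ∈ s, hH.eigenvalues i ≤ t)
    {x : EuclideanSpace ℝ (Fin n)} (hx : x ∈ V hH s) :
    (x : Fin n → ℝ) ⬝ᵥ (H *ᵥ (x : Fin n → ℝ)) ≤ t * ((x : Fin n → ℝ) ⬝ᵥ (x : Fin n → ℝ)) := by
  obtain ⟨c, hc⟩ := (Submodule.mem_span_range_iff_exists_fun ℝ).mp hx
  obtain ⟨h1, h2⟩ := quad_expand hH s c x hc.symm
  rw [h1, h2, Finset.mul_sum]
  refine Finset.sum_le_sum fun i _ => ?_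
  exact mul_le_mul_of_nonneg_right (hup i i.2) (sq_nonneg _)

lemma le_quad_of_mem_V {H : Matrix (Fin n) (Fin n) ℝ} (hH : H.IsHermitian)
    {s : Finset (Fin n)} {t : ℝ} (hlo : ∀ i ∈ s, t ≤ hH.eigenvalues i)
    {x : EuclideanSpace ℝ (Fin n)} (hx : x ∈ V hH s) :
    t * ((x : Fin n → ℝ) ⬝ᵥ (x : Fin n → ℝ)) ≤ (x : Fin n → ℝ) ⬝ᵥ (H *ᵥ (x : Fin n → ℝ)) := by
  obtain ⟨c, hc⟩ := (Submodule.mem_span_range_iff_exists_fun ℝ).mp hx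
  obtain ⟨h1, h2⟩ := quad_expand hH s c x hc.symm
  rw [h1, h2, Finset.mul_sum]
  refine Finset.sum_le_sum fun i _ => ?_
  exact mul_le_mul_of_nonneg_right (hlo i i.2) (sq_nonneg _)

end SVTail

namespace SVTail

lemma card_count {σ lam : Fin n → ℝ}
    (hms : Finset.univ.val.map (fun j => σ j ^ 2) = Finset.univ.val.map lam)
    (p : ℝ → Prop) [DecidablePred p] :
    (Finset.univ.filter (fun j => p (σ j ^ 2))).card
      = (Finset.univ.filter (fun i => p (lam i))).card := by
  have h := congrArg (Multiset.countP p) hms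
  rw [Multiset.countP_map, Multiset.countP_map] at h
  simp only [Finset.card, Finset.filter_val]
  convert h using 2

lemma card_lt_le (i : Fin n) :
    (Finset.univ.filter (fun m : Fin n => (m : ℕ) < (i : ℕ))).card ≤ (i : ℕ) := by
  have h : (Finset.univ.filter (fun m : Fin n => (m : ℕ) < (i : ℕ))).card
      ≤ (Finset.range (i : ℕ)).card :=
    Finset.card_le_card_of_injOn (fun m : Fin n => (m : ℕ))
      (fun a ha => by
        simp only [Finset.mem_coe, Finset.mem_filter, Finset.mem_univ, true_and] at ha
        simpa [Finset.mem_range] using ha)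
      (fun a _ b _ h => Fin.ext h)
  simpa using h

lemma card_le_ge (k : Fin n) :
    (k : ℕ) + 1 ≤ (Finset.univ.filter (fun m : Fin n => (m : ℕ) ≤ (k : ℕ))).card := by
  have h : (Finset.range ((k : ℕ) + 1)).card
      ≤ (Finset.univ.filter (fun m : Fin n => (m : ℕ) ≤ (k : ℕ))).card :=
    Finset.card_le_card_of_injOn
      (fun a => (⟨min a k, lt_of_le_of_lt (min_le_right _ _) k.2⟩ : Fin n))
      (fun a ha => by
        simp only [Finset.mem_coe, Finset.mem_range, Nat.lt_succ_iff] at ha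
        simp only [Finset.mem_coe, Finset.mem_filter, Finset.mem_univ, true_and, Fin.val_mk]
        omega)
      (fun a ha b hb h => by
        simp only [Finset.coe_range, Set.mem_Iio, Nat.lt_succ_iff] at ha hb
        rw [Fin.mk.injEq] at h
        omega)
  simpa using h

end SVTail

namespace SVTail

variable {d : ℕ}

lemma dot_gram (A : Matrix (Fin d) (Fin n) ℝ) (x : Fin n → ℝ) :
    x ⬝ᵥ ((Aᴴ * A) *ᵥ x) = (A *ᵥ x) ⬝ᵥ (A *ᵥ x) := by
  have hAH : Aᴴ = Aᵀ := by ext i j; simp [Matrix.conjTranspose_apply]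
  rw [← Matrix.mulVec_mulVec, Matrix.dotProduct_mulVec, hAH, Matrix.vecMul_transpose]

lemma dot_self_nonneg (u : Fin d → ℝ) : 0 ≤ u ⬝ᵥ u :=
  Finset.sum_nonneg fun i _ => mul_self_nonneg _

lemma dot_self_eq_sum_sq (u : Fin d → ℝ) : u ⬝ᵥ u = ∑ i, u i ^ 2 := by
  simp [dotProduct, pow_two]

lemma sqrt_dot_add (u v : Fin d → ℝ) :
    Real.sqrt ((u + v) ⬝ᵥ (u + v)) ≤ Real.sqrt (u ⬝ᵥ u) + Real.sqrt (v ⬝ᵥ v) := by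
  have hcs : u ⬝ᵥ v ≤ Real.sqrt (u ⬝ᵥ u) * Real.sqrt (v ⬝ᵥ v) := by
    have := Real.sum_mul_le_sqrt_mul_sqrt Finset.univ u v
    rw [dot_self_eq_sum_sq, dot_self_eq_sum_sq]
    exact this
  have hexp : (u + v) ⬝ᵥ (u + v) = u ⬝ᵥ u + 2 * (u ⬝ᵥ v) + v ⬝ᵥ v := by
    simp [add_dotProduct, dotProduct_add, dotProduct_comm v u]
    ring
  have hb : (u + v) ⬝ᵥ (u + v) ≤ (Real.sqrt (u ⬝ᵥ u) + Real.sqrt (v ⬝ᵥ v)) ^ 2 := by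
    rw [hexp, add_sq, Real.sq_sqrt (dot_self_nonneg u), Real.sq_sqrt (dot_self_nonneg v)]
    nlinarith [hcs]
  calc Real.sqrt ((u + v) ⬝ᵥ (u + v)) ≤ Real.sqrt ((Real.sqrt (u ⬝ᵥ u) + Real.sqrt (v ⬝ᵥ v)) ^ 2) :=
        Real.sqrt_le_sqrt hb
    _ = _ := Real.sqrt_sq (by positivity)

end SVTail

namespace SVTail

lemma sq_le_sq_of_antitone {σ : Fin n → ℝ} (hA : Antitone σ) (h0 : ∀ j, 0 ≤ σ j)
    {i m : Fin n} (h : i ≤ m) : σ m ^ 2 ≤ σ i ^ 2 :=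
  pow_le_pow_left₀ (h0 m) (hA h) 2

lemma card_tail {d : ℕ} {A : Matrix (Fin d) (Fin n) ℝ} {σ : Fin n → ℝ}
    (h : IsSingularValues A σ) (i : Fin n) :
    n - (i : ℕ) ≤ (Finset.univ.filter
      (fun l => (Matrix.isHermitian_conjTranspose_mul_self A).eigenvalues l ≤ σ i ^ 2)).card := by
  obtain ⟨ha, h0, hm⟩ := h
  set G := Matrix.isHermitian_conjTranspose_mul_self A
  have hsplit : (Finset.univ.filter (fun l => G.eigenvalues l ≤ σ i ^ 2)).card
      + (Finset.univ.filter (fun l => ¬ (G.eigenvalues l ≤ σ i ^ 2))).card = n := by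
    rw [Finset.card_filter_add_card_filter_not]; simp
  have hcnt : (Finset.univ.filter (fun m : Fin n => ¬ (σ m ^ 2 ≤ σ i ^ 2))).card
      = (Finset.univ.filter (fun l => ¬ (G.eigenvalues l ≤ σ i ^ 2))).card :=
    card_count hm (fun x => ¬ (x ≤ σ i ^ 2))
  have hsub : (Finset.univ.filter (fun m : Fin n => ¬ (σ m ^ 2 ≤ σ i ^ 2))).card
      ≤ (Finset.univ.filter (fun m : Fin n => (m : ℕ) < (i : ℕ))).card := by
    refine Finset.card_le_card (Finset.monotone_filter_right _ ?_)
    intro m _ hm2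
    by_contra hge
    exact hm2 (sq_le_sq_of_antitone ha h0 (by omega))
  have hlt := card_lt_le i
  omega

lemma card_head {d : ℕ} {A : Matrix (Fin d) (Fin n) ℝ} {σ : Fin n → ℝ}
    (h : IsSingularValues A σ) (k : Fin n) :
    (k : ℕ) + 1 ≤ (Finset.univ.filter
      (fun l => σ k ^ 2 ≤ (Matrix.isHermitian_conjTranspose_mul_self A).eigenvalues l)).card := by
  obtain ⟨ha, h0, hm⟩ := h
  set G := Matrix.isHermitian_conjTranspose_mul_self A
  have hcnt : (Finset.univ.filter (fun m : Fin n => σ k ^ 2 ≤ σ m ^ 2)).card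
      = (Finset.univ.filter (fun l => σ k ^ 2 ≤ G.eigenvalues l)).card :=
    card_count hm (fun x => σ k ^ 2 ≤ x)
  have hsub : (Finset.univ.filter (fun m : Fin n => (m : ℕ) ≤ (k : ℕ))).card
      ≤ (Finset.univ.filter (fun m : Fin n => σ k ^ 2 ≤ σ m ^ 2)).card := by
    refine Finset.card_le_card (Finset.monotone_filter_right _ ?_)
    intro m _ hm2
    exact sq_le_sq_of_antitone ha h0 (by omega)
  have hge := card_le_ge k
  omega

/-- **Weyl's inequality for singular values.** -/
lemma weyl {d : ℕ} {A B : Matrix (Fin d) (Fin n) ℝ} {σA σB σC : Fin n → ℝ}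
    (hA : IsSingularValues A σA) (hB : IsSingularValues B σB)
    (hC : IsSingularValues (A + B) σC)
    (i j k : Fin n) (hk : (k : ℕ) = (i : ℕ) + (j : ℕ)) : σC k ≤ σA i + σB j := by
  set GA := Matrix.isHermitian_conjTranspose_mul_self A with hGAdef
  set GB := Matrix.isHermitian_conjTranspose_mul_self B with hGBdef
  set GC := Matrix.isHermitian_conjTranspose_mul_self (A + B) with hGCdef
  set sA := Finset.univ.filter (fun l => GA.eigenvalues l ≤ σA i ^ 2) with hsA
  set sB := Finset.univ.filter (fun l => GB.eigenvalues l ≤ σB j ^ 2) with hsB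
  set sC := Finset.univ.filter (fun l => σC k ^ 2 ≤ GC.eigenvalues l) with hsC
  have hcardA : n - (i : ℕ) ≤ sA.card := by rw [hsA]; exact card_tail hA i
  have hcardB : n - (j : ℕ) ≤ sB.card := by rw [hsB]; exact card_tail hB j
  have hcardC : (k : ℕ) + 1 ≤ sC.card := by rw [hsC]; exact card_head hC k
  -- subspaces
  set VA := V GA sA
  set VB := V GB sB
  set VC := V GC sC
  have hrA : Module.finrank ℝ VA = sA.card := finrank_V GA sA
  have hrB : Module.finrank ℝ VB = sB.card := finrank_V GB sB
  have hrC : Module.finrank ℝ VC = sC.card := finrank_V GC sC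
  have htop : ∀ (U : Submodule ℝ (EuclideanSpace ℝ (Fin n))), Module.finrank ℝ U ≤ n :=
    fun U => le_trans (Submodule.finrank_le U) (by simp [finrank_euclideanSpace])
  have hint1 := Submodule.finrank_sup_add_finrank_inf_eq VA VB
  have hint2 := Submodule.finrank_sup_add_finrank_inf_eq VC (VA ⊓ VB)
  rw [hrA, hrB] at hint1
  rw [hrC] at hint2
  have hpos : 0 < Module.finrank ℝ (VC ⊓ (VA ⊓ VB) : Submodule ℝ (EuclideanSpace ℝ (Fin n))) := by
    have h1 := htop (VA ⊔ VB)
    have h2 := htop (VC ⊔ (VA ⊓ VB))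
    have hin : (i : ℕ) < n := i.2
    have hjn : (j : ℕ) < n := j.2
    have hkn : (k : ℕ) < n := k.2
    omega
  obtain ⟨x, hxmem, hx0⟩ : ∃ x ∈ (VC ⊓ (VA ⊓ VB) : Submodule ℝ (EuclideanSpace ℝ (Fin n))),
      x ≠ 0 := by
    have : Nontrivial (VC ⊓ (VA ⊓ VB) : Submodule ℝ (EuclideanSpace ℝ (Fin n))) :=
      Module.nontrivial_of_finrank_pos hpos
    obtain ⟨⟨y, hy⟩, h0⟩ := exists_ne (0 : (VC ⊓ (VA ⊓ VB) : Submodule ℝ (EuclideanSpace ℝ (Fin n))))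
    exact ⟨y, hy, by simpa [Subtype.ext_iff] using h0⟩
  rw [Submodule.mem_inf, Submodule.mem_inf] at hxmem
  obtain ⟨hxC, hxA, hxB⟩ := hxmem
  set y : Fin n → ℝ := (x : Fin n → ℝ) with hydef
  have hy0 : 0 < y ⬝ᵥ y := by
    rcases (Function.ne_iff).mp (fun h => hx0 (by ext l; exact congrFun h l : x = 0)) with ⟨l, hl⟩
    refine Finset.sum_pos' (fun m _ => mul_self_nonneg _) ⟨l, Finset.mem_univ l, mul_self_pos.mpr hl⟩
  -- quadratic bounds
  have hCq : σC k ^ 2 * (y ⬝ᵥ y) ≤ ((A + B) *ᵥ y) ⬝ᵥ ((A + B) *ᵥ y) := by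
    have := le_quad_of_mem_V GC (fun l hl => (Finset.mem_filter.mp hl).2) hxC
    rwa [dot_gram] at this
  have hAq : (A *ᵥ y) ⬝ᵥ (A *ᵥ y) ≤ σA i ^ 2 * (y ⬝ᵥ y) := by
    have := quad_le_of_mem_V GA (fun l hl => (Finset.mem_filter.mp hl).2) hxA
    rwa [dot_gram] at this
  have hBq : (B *ᵥ y) ⬝ᵥ (B *ᵥ y) ≤ σB j ^ 2 * (y ⬝ᵥ y) := by
    have := quad_le_of_mem_V GB (fun l hl => (Finset.mem_filter.mp hl).2) hxB
    rwa [dot_gram] at this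
  -- take square roots
  have hCs : σC k * Real.sqrt (y ⬝ᵥ y) ≤ Real.sqrt (((A + B) *ᵥ y) ⬝ᵥ ((A + B) *ᵥ y)) := by
    have h1 : σC k * Real.sqrt (y ⬝ᵥ y) = Real.sqrt (σC k ^ 2 * (y ⬝ᵥ y)) := by
      rw [Real.sqrt_mul (sq_nonneg _), Real.sqrt_sq (hC.2.1 k)]
    rw [h1]
    exact Real.sqrt_le_sqrt hCq
  have hAs : Real.sqrt ((A *ᵥ y) ⬝ᵥ (A *ᵥ y)) ≤ σA i * Real.sqrt (y ⬝ᵥ y) := by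
    have h1 : σA i * Real.sqrt (y ⬝ᵥ y) = Real.sqrt (σA i ^ 2 * (y ⬝ᵥ y)) := by
      rw [Real.sqrt_mul (sq_nonneg _), Real.sqrt_sq (hA.2.1 i)]
    rw [h1]
    exact Real.sqrt_le_sqrt hAq
  have hBs : Real.sqrt ((B *ᵥ y) ⬝ᵥ (B *ᵥ y)) ≤ σB j * Real.sqrt (y ⬝ᵥ y) := by
    have h1 : σB j * Real.sqrt (y ⬝ᵥ y) = Real.sqrt (σB j ^ 2 * (y ⬝ᵥ y)) := by
      rw [Real.sqrt_mul (sq_nonneg _), Real.sqrt_sq (hB.2.1 j)]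
    rw [h1]
    exact Real.sqrt_le_sqrt hBq
  have htri : Real.sqrt (((A + B) *ᵥ y) ⬝ᵥ ((A + B) *ᵥ y))
      ≤ Real.sqrt ((A *ᵥ y) ⬝ᵥ (A *ᵥ y)) + Real.sqrt ((B *ᵥ y) ⬝ᵥ (B *ᵥ y)) := by
    rw [Matrix.add_mulVec]
    exact sqrt_dot_add _ _
  have hfinal : σC k * Real.sqrt (y ⬝ᵥ y) ≤ (σA i + σB j) * Real.sqrt (y ⬝ᵥ y) := by
    calc σC k * Real.sqrt (y ⬝ᵥ y) ≤ _ := hCs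
      _ ≤ _ := htri
      _ ≤ σA i * Real.sqrt (y ⬝ᵥ y) + σB j * Real.sqrt (y ⬝ᵥ y) := add_le_add hAs hBs
      _ = (σA i + σB j) * Real.sqrt (y ⬝ᵥ y) := by ring
  exact le_of_mul_le_mul_right hfinal (Real.sqrt_pos.mpr hy0)

end SVTail

namespace SVTail

/-- every matrix has a singular value sequence -/
lemma exists_sv {d : ℕ} (A : Matrix (Fin d) (Fin n) ℝ) : ∃ σ, IsSingularValues A σ := by
  set G := Matrix.isHermitian_conjTranspose_mul_self A with hGdef
  set g : Fin n → ℝ := G.eigenvalues ∘ (Tuple.sort G.eigenvalues) with hgdef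
  have hgmono : Monotone g := Tuple.monotone_sort G.eigenvalues
  have hgnn : ∀ l, 0 ≤ g l := fun l => Matrix.eigenvalues_conjTranspose_mul_self_nonneg A _
  refine ⟨fun j => Real.sqrt (g j.rev), ?_, fun j => Real.sqrt_nonneg _, ?_⟩
  · intro a b hab
    exact Real.sqrt_le_sqrt (hgmono (Fin.rev_le_rev.mpr hab))
  · have hsq : (fun j : Fin n => Real.sqrt (g j.rev) ^ 2) = fun j => g j.rev := by
      funext j; exact Real.sq_sqrt (hgnn _)
    rw [hsq]
    set e : Equiv.Perm (Fin n) := Fin.revPerm.trans (Tuple.sort G.eigenvalues) with hedef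
    have : (fun j : Fin n => g j.rev) = fun j => G.eigenvalues (e j) := rfl
    rw [this]
    have huniv : Finset.univ.val.map (fun j => G.eigenvalues (e j))
        = (Finset.univ.val.map (fun j : Fin n => (e j))).map G.eigenvalues := by
      rw [Multiset.map_map]; rfl
    rw [huniv]
    congr 1
    have := Finset.map_univ_equiv e
    calc Finset.univ.val.map (fun j : Fin n => (e j))
        = (Finset.univ.map e.toEmbedding).val := by rw [Finset.map_val]; rfl
      _ = Finset.univ.val := by rw [Finset.map_univ_equiv]

/-- sum of squared singular values is the squared Frobenius norm -/
lemma sum_sq_sv {d : ℕ} {A : Matrix (Fin d) (Fin n) ℝ} {σ : Fin n → ℝ}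
    (h : IsSingularValues A σ) : ∑ j, σ j ^ 2 = ∑ i, ∑ j, (A i j) ^ 2 := by
  obtain ⟨-, -, hm⟩ := h
  set G := Matrix.isHermitian_conjTranspose_mul_self A with hGdef
  have h1 : ∑ j, σ j ^ 2 = ∑ l, G.eigenvalues l := by
    rw [Finset.sum, Finset.sum]
    exact congrArg Multiset.sum (by simpa using hm)
  have h2 : ∑ l, G.eigenvalues l = (Aᴴ * A).trace := by
    rw [Matrix.IsHermitian.trace_eq_sum_eigenvalues G]
    simp
  have h3 : (Aᴴ * A).trace = ∑ i, ∑ j, (A i j) ^ 2 := by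
    rw [Matrix.trace]
    simp only [Matrix.diag_apply, Matrix.mul_apply, Matrix.conjTranspose_apply]
    rw [Finset.sum_comm]
    refine Finset.sum_congr rfl fun i _ => Finset.sum_congr rfl fun j _ => ?_
    simp [pow_two, mul_comm]
  rw [h1, h2, h3]

end SVTail

namespace SVTail

lemma two_to_one_sum {ι : Type*} [DecidableEq ι] (s t : Finset ι) (m : ι → ι) (f : ι → ℝ)
    (hf : ∀ i, 0 ≤ f i) (hm : ∀ i ∈ s, m i ∈ t)
    (h2 : ∀ i ∈ t, (s.filter (fun j => m j = i)).card ≤ 2) :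
    ∑ j ∈ s, f (m j) ≤ 2 * ∑ i ∈ t, f i := by
  rw [← Finset.sum_fiberwise_of_maps_to hm (fun j => f (m j)), Finset.mul_sum]
  refine Finset.sum_le_sum fun i hi => ?_
  calc ∑ j ∈ s.filter (fun j => m j = i), f (m j)
      = ∑ j ∈ s.filter (fun j => m j = i), f i :=
        Finset.sum_congr rfl fun j hj => by rw [(Finset.mem_filter.mp hj).2]
    _ = (s.filter (fun j => m j = i)).card * f i := by
        rw [Finset.sum_const, nsmul_eq_mul]
    _ ≤ 2 * f i := by
        have := h2 i hi
        have h2' : ((s.filter (fun j => m j = i)).card : ℝ) ≤ 2 := by exact_mod_cast this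
        exact mul_le_mul_of_nonneg_right h2' (hf i)

lemma minkowski {ι : Type*} (s : Finset ι) (f g : ι → ℝ) :
    Real.sqrt (∑ i ∈ s, (f i + g i) ^ 2)
      ≤ Real.sqrt (∑ i ∈ s, f i ^ 2) + Real.sqrt (∑ i ∈ s, g i ^ 2) := by
  have hcs := Real.sum_mul_le_sqrt_mul_sqrt s f g
  have hexp : ∑ i ∈ s, (f i + g i) ^ 2
      = ∑ i ∈ s, f i ^ 2 + 2 * (∑ i ∈ s, f i * g i) + ∑ i ∈ s, g i ^ 2 := by
    rw [Finset.mul_sum, ← Finset.sum_add_distrib, ← Finset.sum_add_distrib]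
    refine Finset.sum_congr rfl fun i _ => by ring
  have hb : ∑ i ∈ s, (f i + g i) ^ 2
      ≤ (Real.sqrt (∑ i ∈ s, f i ^ 2) + Real.sqrt (∑ i ∈ s, g i ^ 2)) ^ 2 := by
    rw [hexp, add_sq, Real.sq_sqrt (Finset.sum_nonneg fun i _ => sq_nonneg _),
      Real.sq_sqrt (Finset.sum_nonneg fun i _ => sq_nonneg _)]
    nlinarith [hcs]
  calc Real.sqrt (∑ i ∈ s, (f i + g i) ^ 2)
      ≤ Real.sqrt ((Real.sqrt (∑ i ∈ s, f i ^ 2) + Real.sqrt (∑ i ∈ s, g i ^ 2)) ^ 2) :=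
        Real.sqrt_le_sqrt hb
    _ = _ := Real.sqrt_sq (by positivity)

end SVTail

end Aux

/-- Weyl-type tail bound
`√(Σ_{j=r+1}^{d} σ_j(Z+Ψ)²) ≤ √2 √(Σ_{j=r+1}^{d} σ_j(Z)²) + √2 ‖Ψ‖_F`.
With 0-based indices the range `r+1 ≤ j ≤ d` (1-based) is `r ≤ j < d`. -/
theorem stmt_10 {d n : ℕ} (r : ℕ) (hr : r ≤ d)
    (Z Ψ : Matrix (Fin d) (Fin n) ℝ)
    (σZ σZΨ : Fin n → ℝ)
    (hσZ : IsSingularValues Z σZ)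
    (hσZΨ : IsSingularValues (Z + Ψ) σZΨ) :
    Real.sqrt (∑ j ∈ Finset.univ.filter (fun j : Fin n => r ≤ (j : ℕ) ∧ (j : ℕ) < d),
        σZΨ j ^ 2) ≤
      Real.sqrt 2 *
        Real.sqrt (∑ j ∈ Finset.univ.filter (fun j : Fin n => r ≤ (j : ℕ) ∧ (j : ℕ) < d),
          σZ j ^ 2) +
      Real.sqrt 2 * frob Ψ := by
  classical
  obtain ⟨σΨ, hσΨ⟩ := SVTail.exists_sv Ψ
  set S := Finset.univ.filter (fun j : Fin n => r ≤ (j : ℕ) ∧ (j : ℕ) < d) with hS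
  set iup : Fin n → Fin n := fun j => ⟨min (r + (((j : ℕ) - r) + 1) / 2) (j : ℕ), by omega⟩
    with hiup
  set idn : Fin n → Fin n := fun j => ⟨((j : ℕ) - r) / 2, by omega⟩ with hidn
  -- pointwise Weyl bound on S
  have hpt : ∀ j ∈ S, σZΨ j ≤ σZ (iup j) + σΨ (idn j) := by
    intro j hj
    obtain ⟨hrj, hjd⟩ := (Finset.mem_filter.mp hj).2
    refine SVTail.weyl hσZ hσΨ hσZΨ (iup j) (idn j) j ?_
    show (j : ℕ) = min (r + (((j : ℕ) - r) + 1) / 2) (j : ℕ) + ((j : ℕ) - r) / 2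
    omega
  -- step 1: monotone + Minkowski
  have step1 : Real.sqrt (∑ j ∈ S, σZΨ j ^ 2)
      ≤ Real.sqrt (∑ j ∈ S, σZ (iup j) ^ 2) + Real.sqrt (∑ j ∈ S, σΨ (idn j) ^ 2) := by
    refine le_trans (Real.sqrt_le_sqrt (Finset.sum_le_sum fun j hj => ?_))
      (SVTail.minkowski S (fun j => σZ (iup j)) (fun j => σΨ (idn j)))
    exact pow_le_pow_left₀ (hσZΨ.2.1 j) (hpt j hj) 2
  -- step 2: 2-to-1 bounds
  have hfib : ∀ (m : Fin n → Fin n), (∀ a : Fin n, r ≤ (a : ℕ) →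
        ((m a : ℕ) = min (r + (((a : ℕ) - r) + 1) / 2) (a : ℕ) ∨
         (m a : ℕ) = ((a : ℕ) - r) / 2)) → True := fun _ _ => trivial
  have h2A : ∑ j ∈ S, σZ (iup j) ^ 2 ≤ 2 * ∑ j ∈ S, σZ j ^ 2 := by
    refine SVTail.two_to_one_sum S S iup (fun i => σZ i ^ 2) (fun i => sq_nonneg _) ?_ ?_
    · intro a ha
      obtain ⟨hra, had⟩ := (Finset.mem_filter.mp ha).2
      refine Finset.mem_filter.mpr ⟨Finset.mem_univ _, ?_, ?_⟩ <;>
        · show _ ; simp only [hiup]; omega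
    · intro i _
      refine le_trans (Finset.card_le_card_of_injOn (fun j => ((j : ℕ) - r) % 2)
        (fun a ha => ?_) (fun a ha b hb hab => ?_)) (by simp : (Finset.range 2).card ≤ 2)
      · simp only [Finset.mem_coe, Finset.mem_range]; omega
      · have ha' := Finset.mem_filter.mp (Finset.mem_coe.mp ha)
        have hb' := Finset.mem_filter.mp (Finset.mem_coe.mp hb)
        have hra : r ≤ (a : ℕ) := ((Finset.mem_filter.mp ha'.1).2).1
        have hrb : r ≤ (b : ℕ) := ((Finset.mem_filter.mp hb'.1).2).1
        have hia' := congrArg Fin.val ha'.2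
        have hib' := congrArg Fin.val hb'.2
        simp only [hiup] at hia' hib'
        have hab2 : ((a : ℕ) - r) % 2 = ((b : ℕ) - r) % 2 := hab
        exact Fin.ext (by omega)
  have h2B : ∑ j ∈ S, σΨ (idn j) ^ 2 ≤ 2 * ∑ j, σΨ j ^ 2 := by
    refine SVTail.two_to_one_sum S Finset.univ idn (fun i => σΨ i ^ 2) (fun i => sq_nonneg _)
      (fun a _ => Finset.mem_univ _) ?_
    intro i _
    refine le_trans (Finset.card_le_card_of_injOn (fun j => ((j : ℕ) - r) % 2)
      (fun a ha => ?_) (fun a ha b hb hab => ?_)) (by simp : (Finset.range 2).card ≤ 2)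
    · simp only [Finset.mem_coe, Finset.mem_range]; omega
    · have ha' := Finset.mem_filter.mp (Finset.mem_coe.mp ha)
      have hb' := Finset.mem_filter.mp (Finset.mem_coe.mp hb)
      have hra : r ≤ (a : ℕ) := ((Finset.mem_filter.mp ha'.1).2).1
      have hrb : r ≤ (b : ℕ) := ((Finset.mem_filter.mp hb'.1).2).1
      have hia' := congrArg Fin.val ha'.2
      have hib' := congrArg Fin.val hb'.2
      simp only [hidn] at hia' hib'
      have hab2 : ((a : ℕ) - r) % 2 = ((b : ℕ) - r) % 2 := hab
      exact Fin.ext (by omega)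
  -- step 3: convert to the stated bound
  have hfr : ∑ j, σΨ j ^ 2 = ∑ i, ∑ j, (Ψ i j) ^ 2 := SVTail.sum_sq_sv hσΨ
  have hA' : Real.sqrt (∑ j ∈ S, σZ (iup j) ^ 2)
      ≤ Real.sqrt 2 * Real.sqrt (∑ j ∈ S, σZ j ^ 2) := by
    rw [← Real.sqrt_mul (by norm_num : (0:ℝ) ≤ 2)]
    exact Real.sqrt_le_sqrt h2A
  have hB' : Real.sqrt (∑ j ∈ S, σΨ (idn j) ^ 2) ≤ Real.sqrt 2 * frob Ψ := by
    rw [frob, ← Real.sqrt_mul (by norm_num : (0:ℝ) ≤ 2)]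
    refine Real.sqrt_le_sqrt ?_
    rw [← hfr]
    exact h2B
  calc Real.sqrt (∑ j ∈ S, σZΨ j ^ 2) ≤ _ := step1
    _ ≤ Real.sqrt 2 * Real.sqrt (∑ j ∈ S, σZ j ^ 2) + Real.sqrt 2 * frob Ψ :=
        add_le_add hA' hB'
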